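/- If a normal pair (G⁺, G⁻) of geodesic graphs on S² with at least one crossing has width greater than two, then its refinement graph H contains a well-formed loop. -/

import Mathlib

open scoped RealInnerProductSpace

noncomputable section

/-- `ℝ³` as a Euclidean space. -/
abbrev E3 : Type := EuclideanSpace ℝ (Fin 3)

/-- The unit sphere `S²` of `ℝ³`. -/
def S2 : Set E3 := Metric.sphere 0 1

/-- The geodesic arc between two points of `S²`:
`arc a b = S² ∩ {s•a + t•b : s ≥ 0, t ≥ 0}`. -/
def arc (a b : E3) : Set E3 :=
  S2 ∩ {x | ∃ s t : ℝ, 0 ≤ s ∧ 0 ≤ t ∧ x = s • a + t • b}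

lemma arc_comm (a b : E3) : arc a b = arc b a := by
  unfold arc
  ext x
  simp only [Set.mem_inter_iff, Set.mem_setOf_eq]
  constructor <;> rintro ⟨hx, s, t, hs, ht, rfl⟩ <;>
    exact ⟨hx, t, s, ht, hs, add_comm _ _⟩

/-- A geodesic graph on `S²`: a finite vertex set contained in `S²` and a finite
set of edges, recorded by their pairs of endpoints, which are geodesic arcs between
distinct non-antipodal vertices; no vertex lies in the relative interior of an edge,
and two distinct edges meet only in common endpoints. -/
structure GeoGraph where
  verts : Set E3
  edges : Set (E3 × E3)
  verts_finite : verts.Finite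
  edges_finite : edges.Finite
  verts_sub : verts ⊆ S2
  ends_mem : ∀ p ∈ edges, p.1 ∈ verts ∧ p.2 ∈ verts
  ends_ne : ∀ p ∈ edges, p.1 ≠ p.2
  ends_nonantip : ∀ p ∈ edges, p.2 ≠ -p.1
  no_vertex_interior : ∀ p ∈ edges, ∀ v ∈ verts, v ∈ arc p.1 p.2 → v = p.1 ∨ v = p.2
  edges_meet_ends : ∀ p ∈ edges, ∀ q ∈ edges, arc p.1 p.2 ≠ arc q.1 q.2 →
    arc p.1 p.2 ∩ arc q.1 q.2 ⊆ (({p.1, p.2} : Set E3) ∩ ({q.1, q.2} : Set E3))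

/-- The point set of a geodesic graph: the union of its edges. -/
def GeoGraph.pointSet (G : GeoGraph) : Set E3 :=
  ⋃ p ∈ G.edges, arc p.1 p.2

/-- A pair of geodesic graphs is a *normal pair* if no vertex of either graph lies in the
point set of the other, each edge of one meets each edge of the other in at most one
point, and no edge of one meeting an edge of the other lies with it in a common
2-dimensional linear subspace of `ℝ³` (so all intersections are transversal crossings). -/
structure IsNormalPair (Gp Gm : GeoGraph) : Prop where
  vertsP_off : ∀ v ∈ Gp.verts, v ∉ Gm.pointSet
  vertsM_off : ∀ v ∈ Gm.verts, v ∉ Gp.pointSet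
  single_cross : ∀ p ∈ Gp.edges, ∀ q ∈ Gm.edges,
    (arc p.1 p.2 ∩ arc q.1 q.2).Subsingleton
  transversal : ∀ p ∈ Gp.edges, ∀ q ∈ Gm.edges,
    (arc p.1 p.2 ∩ arc q.1 q.2).Nonempty →
    ∀ W : Submodule ℝ E3, Module.finrank ℝ W = 2 →
      ¬ (({p.1, p.2, q.1, q.2} : Set E3) ⊆ (W : Set E3))

/-- The crossings of a pair of geodesic graphs: the intersection of their point sets. -/
def crossings (Gp Gm : GeoGraph) : Set E3 :=
  Gp.pointSet ∩ Gm.pointSet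

/-- The vertex set of the common refinement: vertices of both graphs together
with the crossings. -/
def refVerts (Gp Gm : GeoGraph) : Set E3 :=
  Gp.verts ∪ Gm.verts ∪ crossings Gp Gm

/-- The refinement graph `H` of a normal pair: two distinct points of `refVerts` are
adjacent exactly when some edge of `G⁺` or of `G⁻` contains both, and the subarc
between them contains no vertex of `H` other than themselves. -/
def refinement (Gp Gm : GeoGraph) : SimpleGraph E3 where
  Adj p q := p ≠ q ∧ p ∈ refVerts Gp Gm ∧ q ∈ refVerts Gp Gm ∧
    ∃ e : E3 × E3, (e ∈ Gp.edges ∨ e ∈ Gm.edges) ∧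
      p ∈ arc e.1 e.2 ∧ q ∈ arc e.1 e.2 ∧
      ∀ r ∈ refVerts Gp Gm, r ∈ arc p q → r = p ∨ r = q
  symm := ⟨by
    rintro p q ⟨hne, hp, hq, e, he, hpe, hqe, hmin⟩
    refine ⟨hne.symm, hq, hp, e, he, hqe, hpe, fun r hr hrr => ?_⟩
    have := hmin r hr (by rwa [arc_comm])
    tauto⟩
  loopless := ⟨fun p h => h.1 rfl⟩

/-- The width of a pair of geodesic graphs: the distance in the refinement graph `H`
between the vertex set of `G⁺` and the vertex set of `G⁻` (as an extended natural
number; it is `⊤` if no vertex of `G⁺` is connected to a vertex of `G⁻`). -/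
def pairWidth (Gp Gm : GeoGraph) : ℕ∞ :=
  ⨅ (vp ∈ Gp.verts) (vm ∈ Gm.verts), (refinement Gp Gm).edist vp vm

/-- The unit tangent vector at `x ∈ S²` of the geodesic arc from `x` towards `p`:
the unit vector proportional to `p - ⟪p,x⟫ • x`. -/
def tangentVec (x p : E3) : E3 :=
  ‖p - ⟪p, x⟫ • x‖⁻¹ • (p - ⟪p, x⟫ • x)

/-- The determinant of the three vectors `x, u, w` of `ℝ³`. -/
def det3 (x u w : E3) : ℝ :=
  Matrix.det (Matrix.of ![![x 0, x 1, x 2], ![u 0, u 1, u 2], ![w 0, w 1, w 2]])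

/-- The pair `{p, q}` is contained in an edge of the geodesic graph `G`. -/
def EdgeInGraph (G : GeoGraph) (p q : E3) : Prop :=
  ∃ e ∈ G.edges, p ∈ arc e.1 e.2 ∧ q ∈ arc e.1 e.2

/-- A *well-formed loop* in the refinement graph `H` of the pair `(G⁺, G⁻)`:
a closed walk `f 0, f 1, …, f k = f 0` in `H` all of whose edges are deep
(all vertices visited are crossings), with `k ≥ 3`, the vertices `f 0, …, f (k-1)`
pairwise distinct, such that at each intermediate vertex `x = f i` (`1 ≤ i ≤ k-1`),
with incoming tangent `u = -t(x, f (i-1))` and outgoing tangent `w = t(x, f (i+1))`,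
the walk either goes straight (the two edges have the same sign and `u = w`),
turns right from a negative to a positive edge (`det(x,u,w) < 0`), or turns left
from a positive to a negative edge (`det(x,u,w) > 0`). -/
def IsWellFormedLoop (Gp Gm : GeoGraph) (k : ℕ) (f : ℕ → E3) : Prop :=
  3 ≤ k ∧ f k = f 0 ∧
  (∀ i < k, (refinement Gp Gm).Adj (f i) (f (i + 1))) ∧
  (∀ i ≤ k, f i ∈ crossings Gp Gm) ∧
  (∀ i < k, ∀ j < k, i ≠ j → f i ≠ f j) ∧
  (∀ i, 1 ≤ i → i ≤ k - 1 →
    (((EdgeInGraph Gp (f (i - 1)) (f i) ∧ EdgeInGraph Gp (f i) (f (i + 1))) ∨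
      (EdgeInGraph Gm (f (i - 1)) (f i) ∧ EdgeInGraph Gm (f i) (f (i + 1)))) ∧
      -tangentVec (f i) (f (i - 1)) = tangentVec (f i) (f (i + 1))) ∨
    (EdgeInGraph Gm (f (i - 1)) (f i) ∧ EdgeInGraph Gp (f i) (f (i + 1)) ∧
      det3 (f i) (-tangentVec (f i) (f (i - 1))) (tangentVec (f i) (f (i + 1))) < 0) ∨
    (EdgeInGraph Gp (f (i - 1)) (f i) ∧ EdgeInGraph Gm (f i) (f (i + 1)) ∧
      det3 (f i) (-tangentVec (f i) (f (i - 1))) (tangentVec (f i) (f (i + 1))) > 0))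

/-!
Walk along deep edges of `H`. Arriving at a crossing `x` along an edge of one graph, continue
along that edge to the next vertex of `H`; if it is a crossing, go straight. Otherwise it is a
vertex of that graph, and we turn at `x` onto the edge of the other graph through `x`, to the left
from `G⁺` and to the right from `G⁻`: by transversality the two directions of that edge lie on
opposite sides, so one of them has the required sign of `det`. The next vertex of `H` in that
direction is a crossing too, since otherwise `x` would join a vertex of `G⁺` and a vertex of `G⁻`
within distance two. Starting from any deep edge, this produces an infinite walk through the
finitely many crossings; its first repetition closes a well-formed loop, of length at least three
because consecutive vertices differ and no turn reverses the walk.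
-/

open NormedSpace (normalize normalize_smul_of_pos normalize_smul_of_neg norm_normalize)

lemma norm_eq_one_of_mem_arc {a b x : E3} (hx : x ∈ arc a b) : ‖x‖ = 1 := by
  simpa [S2] using hx.1

lemma left_mem_arc {a b : E3} (ha : ‖a‖ = 1) : a ∈ arc a b :=
  ⟨by simpa [S2] using ha, 1, 0, zero_le_one, le_rfl, by simp⟩

lemma right_mem_arc {a b : E3} (hb : ‖b‖ = 1) : b ∈ arc a b := by
  rw [arc_comm]
  exact left_mem_arc hb

lemma arc_subset_arc {a b p q : E3} (hp : p ∈ arc a b) (hq : q ∈ arc a b) :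
    arc p q ⊆ arc a b := by
  obtain ⟨-, sp, tp, hsp, htp, rfl⟩ := hp
  obtain ⟨-, sq, tq, hsq, htq, rfl⟩ := hq
  rintro r ⟨hr, α, β, hα, hβ, rfl⟩
  exact ⟨hr, α * sp + β * sq, α * tp + β * tq, by positivity, by positivity, by module⟩

lemma linearIndependent_pair_of_norm_eq_one {V : Type*} [NormedAddCommGroup V]
    [NormedSpace ℝ V] {a b : V} (ha : ‖a‖ = 1) (hb : ‖b‖ = 1) (hne : a ≠ b) (hna : b ≠ -a) :
    LinearIndependent ℝ ![a, b] := by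
  have ha0 : a ≠ 0 := by rintro rfl; simp at ha
  refine (LinearIndependent.pair_iff' ha0).mpr fun c hc => ?_
  have hc1 : |c| = 1 := by simpa [← hc, norm_smul, ha] using hb
  rcases abs_eq zero_le_one |>.mp hc1 with rfl | rfl
  · exact hne (by simpa using hc)
  · exact hna (by simpa using hc.symm)

open Classical in
/-- Junk value `0` when `x` is not in the span of `a` and `b`. -/
def pairCoords (a b x : E3) : ℝ × ℝ :=
  if h : ∃ st : ℝ × ℝ, x = st.1 • a + st.2 • b then h.choose else 0

lemma pairCoords_eq {a b x : E3} (hab : LinearIndependent ℝ ![a, b]) {s t : ℝ}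
    (hx : x = s • a + t • b) : pairCoords a b x = (s, t) := by
  have h : ∃ st : ℝ × ℝ, x = st.1 • a + st.2 • b := ⟨(s, t), hx⟩
  rw [pairCoords, dif_pos h]
  obtain ⟨h1, h2⟩ := hab.eq_of_pair (h.choose_spec.symm.trans hx)
  exact Prod.ext h1 h2

/-- For `x, r ∈ arc a b`: positive exactly when `r` lies beyond `x` on the way from `a` to `b`. -/
def arcOrient (a b x r : E3) : ℝ :=
  (pairCoords a b r).2 * (pairCoords a b x).1 - (pairCoords a b r).1 * (pairCoords a b x).2

/-- Increases from `0` at `a` to `1` at `b` along `arc a b`. -/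
def arcParam (a b r : E3) : ℝ :=
  (pairCoords a b r).2 / ((pairCoords a b r).1 + (pairCoords a b r).2)

section ArcCoordinates

variable {a b x r : E3} {s t s' t' : ℝ}

lemma arcOrient_eq (hab : LinearIndependent ℝ ![a, b]) (hx : x = s • a + t • b)
    (hr : r = s' • a + t' • b) : arcOrient a b x r = t' * s - s' * t := by
  simp only [arcOrient, pairCoords_eq hab hx, pairCoords_eq hab hr]

lemma arcParam_eq (hab : LinearIndependent ℝ ![a, b]) (hr : r = s' • a + t' • b) :
    arcParam a b r = t' / (s' + t') := by
  simp only [arcParam, pairCoords_eq hab hr]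

lemma add_pos_of_mem_arc (hx : ‖x‖ = 1) (hs : 0 ≤ s) (ht : 0 ≤ t) (hxst : x = s • a + t • b) :
    0 < s + t := by
  refine (add_nonneg hs ht).lt_of_ne fun h => ?_
  obtain ⟨rfl, rfl⟩ : s = 0 ∧ t = 0 := ⟨by linarith, by linarith⟩
  simp [hxst] at hx

lemma pos_left_coord_of_ne_right (hb : ‖b‖ = 1) (hx : ‖x‖ = 1) (hs : 0 ≤ s) (ht : 0 ≤ t)
    (hxst : x = s • a + t • b) (hxb : x ≠ b) : 0 < s := by
  refine hs.lt_of_ne fun h => hxb ?_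
  subst h
  have ht1 : t = 1 := by simpa [hxst, norm_smul, hb, abs_of_nonneg ht] using hx
  simp [hxst, ht1]

lemma pos_right_coord_of_ne_left (ha : ‖a‖ = 1) (hx : ‖x‖ = 1) (hs : 0 ≤ s) (ht : 0 ≤ t)
    (hxst : x = s • a + t • b) (hxa : x ≠ a) : 0 < t :=
  pos_left_coord_of_ne_right ha hx ht hs (by rw [hxst, add_comm]) hxa

lemma arcOrient_left_neg (hab : LinearIndependent ℝ ![a, b]) (ha : ‖a‖ = 1) (hx : x ∈ arc a b)
    (hxa : x ≠ a) : arcOrient a b x a < 0 := by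
  obtain ⟨-, s, t, hs, ht, hxst⟩ := id hx
  have ht0 := pos_right_coord_of_ne_left ha (norm_eq_one_of_mem_arc hx) hs ht hxst hxa
  rw [arcOrient_eq hab hxst (s' := 1) (t' := 0) (by simp)]
  linarith

lemma arcOrient_eq_zero_iff (hab : LinearIndependent ℝ ![a, b]) (hx : x ∈ arc a b)
    (hr : r ∈ arc a b) : arcOrient a b x r = 0 ↔ r = x := by
  refine ⟨fun h => ?_, fun h => by rw [arcOrient, h]; ring⟩
  obtain ⟨-, s, t, hs, ht, hxst⟩ := id hx
  obtain ⟨-, s', t', hs', ht', hrst⟩ := id hr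
  rw [arcOrient_eq hab hxst hrst] at h
  have hkey : (s' + t') • x = (s + t) • r := by
    rw [hxst, hrst, ← sub_eq_zero]
    linear_combination (norm := module) h • (a - b)
  have hpos := add_pos_of_mem_arc (norm_eq_one_of_mem_arc hx) hs ht hxst
  have hsum : s' + t' = s + t := by
    simpa [norm_smul, norm_eq_one_of_mem_arc hx, norm_eq_one_of_mem_arc hr, abs_of_nonneg, hs,
      ht, hs', ht', add_nonneg] using congrArg norm hkey
  rw [hsum] at hkey
  exact (smul_right_injective E3 hpos.ne' hkey).symm

lemma arcOrient_nonneg_of_arcParam_le (hab : LinearIndependent ℝ ![a, b]) (hx : x ∈ arc a b)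
    (hr : r ∈ arc a b) (h : arcParam a b x ≤ arcParam a b r) : 0 ≤ arcOrient a b x r := by
  obtain ⟨-, s, t, hs, ht, hxst⟩ := id hx
  obtain ⟨-, s', t', hs', ht', hrst⟩ := id hr
  rw [arcParam_eq hab hxst, arcParam_eq hab hrst, div_le_div_iff₀
    (add_pos_of_mem_arc (norm_eq_one_of_mem_arc hx) hs ht hxst)
    (add_pos_of_mem_arc (norm_eq_one_of_mem_arc hr) hs' ht' hrst)] at h
  rw [arcOrient_eq hab hxst hrst]
  linarith

lemma exists_next_mem_arc (hab : LinearIndependent ℝ ![a, b]) {S : Set E3} (hS : S.Finite)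
    (hbS : b ∈ S) (hb : ‖b‖ = 1) (hx : x ∈ arc a b) (hxb : x ≠ b) :
    ∃ z ∈ S, z ∈ arc a b ∧ 0 < arcOrient a b x z ∧ ∀ r ∈ S, r ∈ arc x z → r = x ∨ r = z := by
  set T := {r ∈ S | r ∈ arc a b ∧ 0 < arcOrient a b x r}
  have hbT : b ∈ T := by
    obtain ⟨-, s, t, hs, ht, hxst⟩ := id hx
    refine ⟨hbS, right_mem_arc hb, ?_⟩
    rw [arcOrient_eq hab hxst (r := b) (s' := 0) (t' := 1) (by simp)]
    simpa using pos_left_coord_of_ne_right hb (norm_eq_one_of_mem_arc hx) hs ht hxst hxb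
  obtain ⟨z, ⟨hzS, hz, hxz⟩, hmin⟩ :=
    Set.exists_min_image T (arcParam a b) (hS.subset fun r hr => hr.1) ⟨b, hbT⟩
  refine ⟨z, hzS, hz, hxz, fun r hrS hr => ?_⟩
  have hra := arc_subset_arc hx hz hr
  obtain ⟨-, α, β, hα, hβ, hrαβ⟩ := hr
  obtain ⟨-, s, t, -, -, hxst⟩ := id hx
  obtain ⟨-, s', t', -, -, hzst⟩ := id hz
  have hrst : r = (α * s + β * s') • a + (α * t + β * t') • b := by
    rw [hrαβ, hxst, hzst]; module
  have hxr : arcOrient a b x r = β * arcOrient a b x z := by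
    rw [arcOrient_eq hab hxst hrst, arcOrient_eq hab hxst hzst]; ring
  have hzr : arcOrient a b z r = -(α * arcOrient a b x z) := by
    rw [arcOrient_eq hab hzst hrst, arcOrient_eq hab hxst hzst]; ring
  rcases hβ.eq_or_lt with rfl | hβ
  · exact .inl ((arcOrient_eq_zero_iff hab hx hra).mp (by simp [hxr]))
  have hzr_nonneg : 0 ≤ arcOrient a b z r :=
    arcOrient_nonneg_of_arcParam_le hab hz hra (hmin r ⟨hrS, hra, by rw [hxr]; positivity⟩)
  obtain rfl : α = 0 := by nlinarith
  exact .inr ((arcOrient_eq_zero_iff hab hz hra).mp (by simp [hzr]))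

end ArcCoordinates

def tangentPart (x v : E3) : E3 := v - ⟪v, x⟫ • x

section Tangent

variable {a b x q : E3} {s t s' t' : ℝ}

lemma tangentVec_eq_normalize (x p : E3) : tangentVec x p = normalize (tangentPart x p) := rfl

lemma inner_tangentVec_self (hx : ‖x‖ = 1) (p : E3) : ⟪tangentVec x p, x⟫ = 0 := by
  rw [tangentVec, real_inner_smul_left, inner_sub_left, real_inner_smul_left,
    real_inner_self_eq_norm_sq, hx]
  ring

lemma tangentPart_smul_add_smul (x a b : E3) (s t : ℝ) :
    tangentPart x (s • a + t • b) = s • tangentPart x a + t • tangentPart x b := by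
  simp only [tangentPart, inner_add_left, real_inner_smul_left]
  module

lemma tangentPart_self (hx : ‖x‖ = 1) : tangentPart x x = 0 := by
  rw [tangentPart, real_inner_self_eq_norm_sq, hx, one_pow, one_smul, sub_self]

lemma smul_tangentPart_eq (hx : ‖x‖ = 1) (hxst : x = s • a + t • b)
    (hq : q = s' • a + t' • b) :
    s • tangentPart x q = (t' * s - s' * t) • tangentPart x b := by
  have h0 : s • tangentPart x a + t • tangentPart x b = 0 := by
    rw [← tangentPart_smul_add_smul, ← hxst, tangentPart_self hx]
  rw [hq, tangentPart_smul_add_smul]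
  linear_combination (norm := module) s' • h0

variable (hab : LinearIndependent ℝ ![a, b]) (hb : ‖b‖ = 1) (hx : x ∈ arc a b) (hxb : x ≠ b)
include hab hb hx hxb

lemma tangentVec_eq_normalize_arcOrient_smul (hq : q ∈ arc a b) :
    tangentVec x q = normalize (arcOrient a b x q • tangentPart x b) := by
  obtain ⟨-, s, t, hs, ht, hxst⟩ := id hx
  obtain ⟨-, s', t', -, -, hqst⟩ := hq
  have hs0 := pos_left_coord_of_ne_right hb (norm_eq_one_of_mem_arc hx) hs ht hxst hxb
  rw [tangentVec_eq_normalize, ← normalize_smul_of_pos hs0,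
    smul_tangentPart_eq (norm_eq_one_of_mem_arc hx) hxst hqst, arcOrient_eq hab hxst hqst]

lemma tangentPart_ne_zero : tangentPart x b ≠ 0 := by
  obtain ⟨-, s, t, hs, ht, hxst⟩ := id hx
  have hs0 := pos_left_coord_of_ne_right hb (norm_eq_one_of_mem_arc hx) hs ht hxst hxb
  intro hb0
  have ha0 : tangentPart x a = 0 := by
    have h := smul_tangentPart_eq (norm_eq_one_of_mem_arc hx) hxst (s' := 1) (t' := 0) (q := a)
      (by simp)
    simpa [hb0, hs0.ne'] using h
  have hdep : ⟪b, x⟫ • a + (-⟪a, x⟫) • b = 0 := by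
    rw [tangentPart] at ha0 hb0
    linear_combination (norm := module) ⟪b, x⟫ • ha0 - ⟪a, x⟫ • hb0
  have hbx : ⟪b, x⟫ = 0 := (hab.eq_zero_of_pair hdep).1
  simp [tangentPart, hbx] at hb0
  simp [hb0] at hb

lemma norm_tangentVec_right : ‖tangentVec x b‖ = 1 := by
  rw [tangentVec_eq_normalize]
  exact norm_normalize (tangentPart_ne_zero hab hb hx hxb)

lemma tangentVec_eq_of_arcOrient_pos (hq : q ∈ arc a b) (h : 0 < arcOrient a b x q) :
    tangentVec x q = tangentVec x b := by
  rw [tangentVec_eq_normalize_arcOrient_smul hab hb hx hxb hq, normalize_smul_of_pos h]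
  rfl

lemma tangentVec_left_eq_neg_right (ha : ‖a‖ = 1) (hxa : x ≠ a) :
    tangentVec x a = -tangentVec x b := by
  rw [tangentVec_eq_normalize_arcOrient_smul hab hb hx hxb (left_mem_arc ha),
    normalize_smul_of_neg (arcOrient_left_neg hab ha hx hxa)]
  rfl

lemma tangentVec_eq_left_or_right (ha : ‖a‖ = 1) (hxa : x ≠ a) (hq : q ∈ arc a b)
    (hqx : q ≠ x) : tangentVec x q = tangentVec x a ∨ tangentVec x q = tangentVec x b := by
  rcases lt_or_gt_of_ne (mt (arcOrient_eq_zero_iff hab hx hq).mp hqx) with h | h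
  · left
    rw [tangentVec_left_eq_neg_right hab hb hx hxb ha hxa,
      tangentVec_eq_normalize_arcOrient_smul hab hb hx hxb hq, normalize_smul_of_neg h]
    rfl
  · exact .inr (tangentVec_eq_of_arcOrient_pos hab hb hx hxb hq h)

lemma tangentVec_ne_zero (ha : ‖a‖ = 1) (hxa : x ≠ a) (hq : q ∈ arc a b) (hqx : q ≠ x) :
    tangentVec x q ≠ 0 := by
  rw [← norm_ne_zero_iff]
  rcases tangentVec_eq_left_or_right hab hb hx hxb ha hxa hq hqx with h | h <;>
    simp [h, tangentVec_left_eq_neg_right hab hb hx hxb ha hxa,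
      norm_tangentVec_right hab hb hx hxb]

end Tangent

section Determinant

lemma det3_eq (x u w : E3) : det3 x u w =
    x 0 * (u 1 * w 2 - u 2 * w 1) - x 1 * (u 0 * w 2 - u 2 * w 0)
      + x 2 * (u 0 * w 1 - u 1 * w 0) := by
  rw [det3, Matrix.det_fin_three]
  simp only [Matrix.of_apply, Matrix.cons_val', Matrix.cons_val_zero, Matrix.cons_val_one,
    Matrix.cons_val_two, Matrix.empty_val', Matrix.cons_val_fin_one, Matrix.head_cons,
    Matrix.tail_cons, Matrix.head_fin_const]
  ring

lemma det3_neg_right (x u w : E3) : det3 x u (-w) = -det3 x u w := by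
  simp only [det3_eq, PiLp.neg_apply]
  ring

lemma exists_smul_add_smul_add_smul_eq_zero_of_det3_eq_zero {x u w : E3} (h : det3 x u w = 0) :
    ∃ c : Fin 3 → ℝ, c ≠ 0 ∧ c 0 • x + c 1 • u + c 2 • w = 0 := by
  obtain ⟨c, hc, hcM⟩ := Matrix.exists_vecMul_eq_zero_iff.mpr h
  refine ⟨c, hc, ?_⟩
  ext j
  have hj := congrFun hcM j
  simp only [Matrix.vecMul, dotProduct, Fin.sum_univ_three] at hj
  fin_cases j <;> simpa [Matrix.of_apply] using hj

lemma linearIndependent_pair_of_inner_eq_zero {V : Type*} [NormedAddCommGroup V]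
    [InnerProductSpace ℝ V] {x u : V} (hx : ‖x‖ = 1) (hu : u ≠ 0) (hux : ⟪u, x⟫ = 0) :
    LinearIndependent ℝ ![x, u] := by
  have hx0 : x ≠ 0 := by rintro rfl; simp at hx
  refine (LinearIndependent.pair_iff' hx0).mpr fun c hc => hu ?_
  rw [← hc, real_inner_smul_left, real_inner_self_eq_norm_sq, hx] at hux
  simp [← hc, by simpa using hux]

variable {x u w : E3} (hx : ‖x‖ = 1) (hu : u ≠ 0) (hux : ⟪u, x⟫ = 0)
include hx hu hux

lemma mem_span_of_det3_eq_zero (h : det3 x u w = 0) :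
    w ∈ Submodule.span ℝ (Set.range ![x, u]) := by
  obtain ⟨c, hc, hcomb⟩ := exists_smul_add_smul_add_smul_eq_zero_of_det3_eq_zero h
  have hli := linearIndependent_pair_of_inner_eq_zero hx hu hux
  have hc2 : c 2 ≠ 0 := by
    intro hc2
    rw [hc2, zero_smul, add_zero] at hcomb
    obtain ⟨hc0, hc1⟩ := hli.eq_zero_of_pair hcomb
    exact hc (funext fun j => by fin_cases j <;> assumption)
  have hw : w = (-(c 0 / c 2)) • x + (-(c 1 / c 2)) • u := by
    apply smul_right_injective E3 hc2
    simp only [smul_add, smul_smul, mul_neg, mul_div_cancel₀ _ hc2]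
    linear_combination (norm := module) hcomb
  rw [hw]
  exact Submodule.add_mem _ (Submodule.smul_mem _ _ (Submodule.subset_span ⟨0, rfl⟩))
    (Submodule.smul_mem _ _ (Submodule.subset_span ⟨1, rfl⟩))

lemma finrank_span_pair : Module.finrank ℝ (Submodule.span ℝ (Set.range ![x, u])) = 2 :=
  finrank_span_eq_card (linearIndependent_pair_of_inner_eq_zero hx hu hux)

end Determinant

section Span

variable {W : Submodule ℝ E3} {a b x p : E3}

lemma mem_of_tangentVec_mem (hxW : x ∈ W) (h : tangentVec x p ∈ W) : p ∈ W := by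
  have hp : p = ‖tangentPart x p‖ • tangentVec x p + ⟪p, x⟫ • x := by
    rw [tangentVec_eq_normalize, NormedSpace.norm_smul_normalize, tangentPart, sub_add_cancel]
  rw [hp]
  exact W.add_mem (W.smul_mem _ h) (W.smul_mem _ hxW)

lemma left_mem_of_mem_arc (hb : ‖b‖ = 1) (hx : x ∈ arc a b) (hxb : x ≠ b) (hxW : x ∈ W)
    (hbW : b ∈ W) : a ∈ W := by
  obtain ⟨-, s, t, hs, ht, hxst⟩ := id hx
  have hs0 := pos_left_coord_of_ne_right hb (norm_eq_one_of_mem_arc hx) hs ht hxst hxb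
  have ha : a = s⁻¹ • (x - t • b) := by
    rw [hxst, add_sub_cancel_right, smul_smul, inv_mul_cancel₀ hs0.ne', one_smul]
  rw [ha]
  exact W.smul_mem _ (W.sub_mem hxW (W.smul_mem _ hbW))

end Span

namespace GeoGraph

variable {G : GeoGraph} {a b v x y : E3}

lemma norm_eq_one_of_mem_verts (hv : v ∈ G.verts) : ‖v‖ = 1 := by
  simpa [S2] using G.verts_sub hv

lemma mem_pointSet : x ∈ G.pointSet ↔ ∃ p ∈ G.edges, x ∈ arc p.1 p.2 := by
  simp [GeoGraph.pointSet]

variable (G) in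
def IsEdge (a b : E3) : Prop := (a, b) ∈ G.edges ∨ (b, a) ∈ G.edges

lemma isEdge_of_mem {p : E3 × E3} (hp : p ∈ G.edges) : G.IsEdge p.1 p.2 := .inl hp

lemma IsEdge.symm (h : G.IsEdge a b) : G.IsEdge b a := Or.symm h

lemma IsEdge.left_mem_verts (h : G.IsEdge a b) : a ∈ G.verts := by
  rcases h with h | h
  exacts [(G.ends_mem _ h).1, (G.ends_mem _ h).2]

lemma IsEdge.right_mem_verts (h : G.IsEdge a b) : b ∈ G.verts := h.symm.left_mem_verts

lemma IsEdge.norm_left (h : G.IsEdge a b) : ‖a‖ = 1 :=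
  norm_eq_one_of_mem_verts h.left_mem_verts

lemma IsEdge.norm_right (h : G.IsEdge a b) : ‖b‖ = 1 :=
  norm_eq_one_of_mem_verts h.right_mem_verts

lemma IsEdge.ne_left (h : G.IsEdge a b) (hxG : x ∉ G.verts) : x ≠ a :=
  fun hxa => hxG (hxa ▸ h.left_mem_verts)

lemma IsEdge.ne_right (h : G.IsEdge a b) (hxG : x ∉ G.verts) : x ≠ b :=
  fun hxb => hxG (hxb ▸ h.right_mem_verts)

lemma IsEdge.linearIndependent (h : G.IsEdge a b) : LinearIndependent ℝ ![a, b] := by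
  have ha := h.norm_left
  have hb := h.norm_right
  rcases h with h | h
  · exact linearIndependent_pair_of_norm_eq_one ha hb (G.ends_ne _ h) (G.ends_nonantip _ h)
  · rw [LinearIndependent.pair_symm_iff]
    exact linearIndependent_pair_of_norm_eq_one hb ha (G.ends_ne _ h) (G.ends_nonantip _ h)

lemma IsEdge.exists_mem_edges (h : G.IsEdge a b) : ∃ e ∈ G.edges, arc e.1 e.2 = arc a b := by
  rcases h with h | h
  exacts [⟨_, h, rfl⟩, ⟨_, h, arc_comm b a⟩]

lemma IsEdge.edgeInGraph (h : G.IsEdge a b) (hx : x ∈ arc a b) (hy : y ∈ arc a b) :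
    EdgeInGraph G x y := by
  obtain ⟨e, he, harc⟩ := h.exists_mem_edges
  exact ⟨e, he, harc ▸ hx, harc ▸ hy⟩

lemma IsEdge.arc_subset_pointSet (h : G.IsEdge a b) : arc a b ⊆ G.pointSet := by
  obtain ⟨e, he, harc⟩ := h.exists_mem_edges
  exact fun x hx => mem_pointSet.mpr ⟨e, he, harc ▸ hx⟩

lemma IsEdge.eq_or_eq_of_mem_verts (h : G.IsEdge a b) (hv : v ∈ G.verts) (hva : v ∈ arc a b) :
    v = a ∨ v = b := by
  rcases h with h | h
  · exact G.no_vertex_interior _ h v hv hva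
  · exact (G.no_vertex_interior _ h v hv (arc_comm a b ▸ hva)).symm

section Tangent

variable (h : G.IsEdge a b) (hxG : x ∉ G.verts) (hx : x ∈ arc a b)
include h hxG hx

lemma IsEdge.tangentVec_left_eq_neg_right : tangentVec x a = -tangentVec x b :=
  _root_.tangentVec_left_eq_neg_right h.linearIndependent h.norm_right hx (h.ne_right hxG)
    h.norm_left (h.ne_left hxG)

lemma IsEdge.tangentVec_eq_left_or_right (hy : y ∈ arc a b) (hyx : y ≠ x) :
    tangentVec x y = tangentVec x a ∨ tangentVec x y = tangentVec x b :=
  _root_.tangentVec_eq_left_or_right h.linearIndependent h.norm_right hx (h.ne_right hxG)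
    h.norm_left (h.ne_left hxG) hy hyx

lemma IsEdge.tangentVec_ne_zero (hy : y ∈ arc a b) (hyx : y ≠ x) : tangentVec x y ≠ 0 :=
  _root_.tangentVec_ne_zero h.linearIndependent h.norm_right hx (h.ne_right hxG) h.norm_left
    (h.ne_left hxG) hy hyx

end Tangent

end GeoGraph

open GeoGraph

section NormalPair

variable {G G' : GeoGraph} {a b c d r x : E3}

lemma crossings_comm (G G' : GeoGraph) : crossings G G' = crossings G' G := Set.inter_comm _ _

lemma refinement_comm (G G' : GeoGraph) : refinement G G' = refinement G' G := by
  have hV : refVerts G G' = refVerts G' G := by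
    rw [refVerts, refVerts, crossings_comm, Set.union_comm G.verts]
  ext p q
  simp only [refinement, hV, or_comm]

lemma pairWidth_comm (G G' : GeoGraph) : pairWidth G G' = pairWidth G' G := by
  rw [pairWidth, pairWidth, iInf₂_comm, refinement_comm]
  simp_rw [SimpleGraph.edist_comm]

lemma IsNormalPair.symm (h : IsNormalPair G G') : IsNormalPair G' G where
  vertsP_off := h.vertsM_off
  vertsM_off := h.vertsP_off
  single_cross p hp q hq := Set.inter_comm (arc q.1 q.2) _ ▸ h.single_cross q hq p hp
  transversal p hp q hq hpq W hW hsub :=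
    h.transversal q hq p hp (Set.inter_comm (arc p.1 p.2) _ ▸ hpq) W hW
      (by simp only [Set.insert_subset_iff, Set.singleton_subset_iff] at hsub ⊢; tauto)

variable (hnp : IsNormalPair G G')
include hnp

lemma notMem_verts_of_mem_crossings (hx : x ∈ crossings G G') : x ∉ G.verts ∧ x ∉ G'.verts :=
  ⟨fun h => hnp.vertsP_off x h hx.2, fun h => hnp.vertsM_off x h hx.1⟩

lemma crossings_finite : (crossings G G').Finite := by
  have hsub : crossings G G' ⊆ ⋃ p ∈ G.edges, ⋃ q ∈ G'.edges, arc p.1 p.2 ∩ arc q.1 q.2 := by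
    rintro x ⟨hxG, hxG'⟩
    obtain ⟨p, hp, hxp⟩ := mem_pointSet.mp hxG
    obtain ⟨q, hq, hxq⟩ := mem_pointSet.mp hxG'
    exact Set.mem_biUnion hp (Set.mem_biUnion hq ⟨hxp, hxq⟩)
  exact (G.edges_finite.biUnion fun p hp => G'.edges_finite.biUnion fun q hq =>
    (hnp.single_cross p hp q hq).finite).subset hsub

lemma refVerts_finite : (refVerts G G').Finite :=
  (G.verts_finite.union G'.verts_finite).union (crossings_finite hnp)

lemma GeoGraph.IsEdge.mem_crossings_or_eq (hab : G.IsEdge a b) (hr : r ∈ refVerts G G')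
    (hra : r ∈ arc a b) : r ∈ crossings G G' ∨ r = a ∨ r = b := by
  rcases hr with (hr | hr) | hr
  · exact .inr (hab.eq_or_eq_of_mem_verts hr hra)
  · exact absurd (hab.arc_subset_pointSet hra) (hnp.vertsM_off r hr)
  · exact .inl hr

lemma IsNormalPair.not_subset_of_isEdge (hab : G.IsEdge a b) (hcd : G'.IsEdge c d)
    (hxab : x ∈ arc a b) (hxcd : x ∈ arc c d) {W : Submodule ℝ E3}
    (hW : Module.finrank ℝ W = 2) : ¬ (a ∈ W ∧ b ∈ W ∧ c ∈ W ∧ d ∈ W) := by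
  intro hsub
  rcases hab with hab | hab <;> rcases hcd with hcd | hcd <;>
    refine hnp.transversal _ hab _ hcd ⟨x, ?_, ?_⟩ W hW ?_ <;>
    simp_all [Set.insert_subset_iff, arc_comm b a, arc_comm d c]

lemma det3_tangentVec_ne_zero (hab : G.IsEdge a b) (hcd : G'.IsEdge c d)
    (hxab : x ∈ arc a b) (hxcd : x ∈ arc c d) (hxc : x ∈ crossings G G') :
    det3 x (tangentVec x b) (tangentVec x d) ≠ 0 := by
  obtain ⟨hxG, hxG'⟩ := notMem_verts_of_mem_crossings hnp hxc
  have hx := norm_eq_one_of_mem_arc hxab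
  have hu : tangentVec x b ≠ 0 := by
    rw [← norm_ne_zero_iff,
      norm_tangentVec_right hab.linearIndependent hab.norm_right hxab (hab.ne_right hxG)]
    exact one_ne_zero
  have hux := inner_tangentVec_self hx b
  intro hdet
  set W := Submodule.span ℝ (Set.range ![x, tangentVec x b])
  have hxW : x ∈ W := Submodule.subset_span ⟨0, rfl⟩
  have hbW : b ∈ W := mem_of_tangentVec_mem hxW (Submodule.subset_span ⟨1, rfl⟩)
  have hdW : d ∈ W := mem_of_tangentVec_mem hxW (mem_span_of_det3_eq_zero hx hu hux hdet)
  exact hnp.not_subset_of_isEdge hab hcd hxab hxcd (finrank_span_pair hx hu hux)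
    ⟨left_mem_of_mem_arc hab.norm_right hxab (hab.ne_right hxG) hxW hbW, hbW,
      left_mem_of_mem_arc hcd.norm_right hxcd (hcd.ne_right hxG') hxW hdW, hdW⟩

end NormalPair

section Walk

variable {G G' : GeoGraph} {a b v w x y : E3}

lemma pairWidth_le_two_of_adj (hv : v ∈ G.verts) (hw : w ∈ G'.verts)
    (hxv : (refinement G G').Adj x v) (hxw : (refinement G G').Adj x w) : pairWidth G G' ≤ 2 :=
  calc pairWidth G G' ≤ (refinement G G').edist v w := iInf₂_le_of_le v hv (iInf₂_le w hw)
    _ ≤ (refinement G G').edist v x + (refinement G G').edist x w :=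
      SimpleGraph.edist_triangle
    _ = 2 := by
      rw [SimpleGraph.edist_eq_one_iff_adj.mpr hxv.symm, SimpleGraph.edist_eq_one_iff_adj.mpr hxw]
      rfl

lemma edgeInGraph_of_adj (h : (refinement G G').Adj y x) :
    EdgeInGraph G y x ∨ EdgeInGraph G' y x := by
  obtain ⟨-, -, -, e, he | he, hye, hxe, -⟩ := h
  exacts [.inl ⟨e, he, hye, hxe⟩, .inr ⟨e, he, hye, hxe⟩]

variable (hnp : IsNormalPair G G')
include hnp

lemma exists_adj_next (hab : G.IsEdge a b) (hx : x ∈ arc a b) (hxc : x ∈ crossings G G') :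
    ∃ z, (refinement G G').Adj x z ∧ z ∈ arc a b ∧ tangentVec x z = tangentVec x b ∧
      (z ∈ crossings G G' ∨ z = b) := by
  obtain ⟨hxG, -⟩ := notMem_verts_of_mem_crossings hnp hxc
  have hxb := hab.ne_right hxG
  have hli := hab.linearIndependent
  obtain ⟨z, hzV, hz, hxz, hbetween⟩ := exists_next_mem_arc hli (refVerts_finite hnp)
    (.inl (.inl hab.right_mem_verts)) hab.norm_right hx hxb
  obtain ⟨e, he, harc⟩ := hab.exists_mem_edges
  have hzx : x ≠ z := by
    rintro rfl
    exact hxz.ne' ((arcOrient_eq_zero_iff hli hx hx).mpr rfl)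
  refine ⟨z, ⟨hzx, .inr hxc, hzV, e, .inl he, harc ▸ hx, harc ▸ hz, hbetween⟩, hz,
    tangentVec_eq_of_arcOrient_pos hli hab.norm_right hx hxb hz hxz, ?_⟩
  rcases hab.mem_crossings_or_eq hnp hzV hz with h | rfl | h
  · exact .inl h
  · exact absurd hxz (arcOrient_left_neg hli hab.norm_left hx (hab.ne_left hxG)).not_gt
  · exact .inr h

/-- `ε > 0` asks for a left turn, `ε < 0` for a right one. -/
lemma exists_turn (hw : 2 < pairWidth G G') (hab : G.IsEdge a b) (hx : x ∈ arc a b)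
    (hxc : x ∈ crossings G G') (hxb : (refinement G G').Adj x b) {ε : ℝ} (hε : ε ≠ 0) :
    ∃ z ∈ crossings G G', (refinement G G').Adj x z ∧ EdgeInGraph G' x z ∧
      0 < ε * det3 x (tangentVec x b) (tangentVec x z) := by
  obtain ⟨q, hq, hxq⟩ := mem_pointSet.mp hxc.2
  obtain ⟨-, hxG'⟩ := notMem_verts_of_mem_crossings hnp hxc
  have hqe : G'.IsEdge q.1 q.2 := isEdge_of_mem hq
  have hD := mul_ne_zero hε (det3_tangentVec_ne_zero hnp hab hqe hx hxq hxc)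
  obtain ⟨c, d, hcd, hxcd, hturn⟩ : ∃ c d, G'.IsEdge c d ∧ x ∈ arc c d ∧
      0 < ε * det3 x (tangentVec x b) (tangentVec x d) := by
    rcases hD.lt_or_gt with h | h
    · refine ⟨q.2, q.1, hqe.symm, arc_comm q.1 q.2 ▸ hxq, ?_⟩
      rw [hqe.tangentVec_left_eq_neg_right hxG' hxq, det3_neg_right]
      linarith
    · exact ⟨q.1, q.2, hqe, hxq, h⟩
  obtain ⟨z, hxz, hz, hzt, hzc | rfl⟩ :=
    exists_adj_next hnp.symm hcd hxcd (crossings_comm G G' ▸ hxc)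
  · rw [refinement_comm] at hxz
    exact ⟨z, crossings_comm G' G ▸ hzc, hxz, hcd.edgeInGraph hxcd hz, hzt ▸ hturn⟩
  · rw [refinement_comm] at hxz
    exact absurd hw (pairWidth_le_two_of_adj hab.right_mem_verts hcd.right_mem_verts hxb hxz).not_gt

lemma exists_straight_or_turn (hw : 2 < pairWidth G G') (hxc : x ∈ crossings G G')
    (hyx : y ≠ x) (hG : EdgeInGraph G y x) {ε : ℝ} (hε : ε ≠ 0) :
    ∃ z ∈ crossings G G', (refinement G G').Adj x z ∧
      ((EdgeInGraph G x z ∧ -tangentVec x y = tangentVec x z) ∨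
        (EdgeInGraph G' x z ∧ 0 < ε * det3 x (-tangentVec x y) (tangentVec x z))) := by
  obtain ⟨e, he, hye, hxe⟩ := hG
  obtain ⟨hxG, -⟩ := notMem_verts_of_mem_crossings hnp hxc
  have hee : G.IsEdge e.1 e.2 := isEdge_of_mem he
  obtain ⟨a, b, hab, hx, hy⟩ : ∃ a b, G.IsEdge a b ∧ x ∈ arc a b ∧
      -tangentVec x y = tangentVec x b := by
    have hopp := hee.tangentVec_left_eq_neg_right hxG hxe
    rcases hee.tangentVec_eq_left_or_right hxG hxe hye hyx with h | h
    · exact ⟨e.1, e.2, hee, hxe, by rw [h, hopp, neg_neg]⟩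
    · exact ⟨e.2, e.1, hee.symm, arc_comm e.1 e.2 ▸ hxe, by rw [h, hopp]⟩
  obtain ⟨z, hxz, hz, hzt, hzc | rfl⟩ := exists_adj_next hnp hab hx hxc
  · exact ⟨z, hzc, hxz, .inl ⟨hab.edgeInGraph hx hz, hy.trans hzt.symm⟩⟩
  · obtain ⟨z, hzc, hxz', hG', hturn⟩ := exists_turn hnp hw hab hx hxc hxz hε
    exact ⟨z, hzc, hxz', .inr ⟨hG', hy ▸ hturn⟩⟩

lemma exists_adj_crossings (hw : 2 < pairWidth G G') (hcross : (crossings G G').Nonempty) :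
    ∃ y x, y ∈ crossings G G' ∧ x ∈ crossings G G' ∧ (refinement G G').Adj y x := by
  obtain ⟨x, hxc⟩ := hcross
  obtain ⟨p, hp, hxp⟩ := mem_pointSet.mp hxc.1
  obtain ⟨q, hq, hxq⟩ := mem_pointSet.mp hxc.2
  obtain ⟨y, hxy, -, -, hyc | rfl⟩ := exists_adj_next hnp (isEdge_of_mem hp) hxp hxc
  · exact ⟨y, x, hyc, hxc, hxy.symm⟩
  obtain ⟨z, hxz, -, -, hzc | rfl⟩ :=
    exists_adj_next hnp.symm (isEdge_of_mem hq) hxq (crossings_comm G G' ▸ hxc)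
  · rw [refinement_comm] at hxz
    exact ⟨z, x, crossings_comm G' G ▸ hzc, hxc, hxz.symm⟩
  · rw [refinement_comm] at hxz
    exact absurd hw (pairWidth_le_two_of_adj (G.ends_mem p hp).2 (G'.ends_mem q hq).2 hxy
      hxz).not_gt

end Walk

section Sequences

variable {α : Type*}

lemma exists_seq_of_forall_exists {P : α → α → Prop} {R : α → α → α → Prop}
    (step : ∀ y x, P y x → ∃ z, P x z ∧ R y x z) {y₀ x₀ : α} (h₀ : P y₀ x₀) :
    ∃ v : ℕ → α, ∀ n, P (v n) (v (n + 1)) ∧ R (v n) (v (n + 1)) (v (n + 2)) := by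
  choose! next hnextP hnextR using step
  let w : ℕ → α × α := fun n => (fun s => (s.2, next s.1 s.2))^[n] (y₀, x₀)
  have hw : ∀ n, w (n + 1) = ((w n).2, next (w n).1 (w n).2) := fun n =>
    Function.iterate_succ_apply' _ n _
  have hP : ∀ n, P (w n).1 (w n).2 := by
    intro n
    induction n with
    | zero => exact h₀
    | succ n ih => rw [hw]; exact hnextP _ _ ih
  refine ⟨fun n => (w n).1, fun n => ?_⟩
  simp only [hw]
  exact ⟨hP n, hnextR _ _ (hP n)⟩

lemma exists_injOn_periodic (v : ℕ → α) (hv : (Set.range v).Finite) :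
    ∃ i d, 0 < d ∧ v (i + d) = v i ∧ Set.InjOn (fun l => v (i + l)) (Set.Iio d) := by
  classical
  have hex : ∃ d, 0 < d ∧ ∃ i, v (i + d) = v i := by
    have := hv.to_subtype
    obtain ⟨i, j, hij, h⟩ := Finite.exists_ne_map_eq_of_infinite (Set.rangeFactorization v)
    have h : v i = v j := congrArg Subtype.val h
    rcases hij.lt_or_gt with hij | hij
    · exact ⟨j - i, by omega, i, by rw [Nat.add_sub_cancel' hij.le, h]⟩
    · exact ⟨i - j, by omega, j, by rw [Nat.add_sub_cancel' hij.le, h]⟩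
  obtain ⟨hd, i, hi⟩ := Nat.find_spec hex
  refine ⟨i, Nat.find hex, hd, hi, fun l hl m hm hlm => ?_⟩
  by_contra hne
  rcases Ne.lt_or_gt hne with h | h
  · exact Nat.find_min hex (show m - l < Nat.find hex by have := Set.mem_Iio.mp hm; omega)
      ⟨by omega, i + l, by rw [add_assoc, Nat.add_sub_cancel' h.le]; exact hlm.symm⟩
  · exact Nat.find_min hex (show l - m < Nat.find hex by have := Set.mem_Iio.mp hl; omega)
      ⟨by omega, i + m, by rw [add_assoc, Nat.add_sub_cancel' h.le]; exact hlm⟩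

end Sequences

section WellFormedLoop

variable {Gp Gm : GeoGraph} {x y z : E3}

def IsAdmissibleTurn (Gp Gm : GeoGraph) (y x z : E3) : Prop :=
  (((EdgeInGraph Gp y x ∧ EdgeInGraph Gp x z) ∨ (EdgeInGraph Gm y x ∧ EdgeInGraph Gm x z)) ∧
      -tangentVec x y = tangentVec x z) ∨
    (EdgeInGraph Gm y x ∧ EdgeInGraph Gp x z ∧ det3 x (-tangentVec x y) (tangentVec x z) < 0) ∨
    (EdgeInGraph Gp y x ∧ EdgeInGraph Gm x z ∧ det3 x (-tangentVec x y) (tangentVec x z) > 0)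

variable (hnp : IsNormalPair Gp Gm)
include hnp

lemma exists_admissibleTurn (hw : 2 < pairWidth Gp Gm) (hxc : x ∈ crossings Gp Gm)
    (hyx : (refinement Gp Gm).Adj y x) :
    ∃ z ∈ crossings Gp Gm, (refinement Gp Gm).Adj x z ∧ IsAdmissibleTurn Gp Gm y x z := by
  rcases edgeInGraph_of_adj hyx with hG | hG
  · obtain ⟨z, hzc, hxz, ⟨hGz, hstraight⟩ | ⟨hGz, hleft⟩⟩ :=
      exists_straight_or_turn hnp hw hxc hyx.ne hG one_ne_zero
    · exact ⟨z, hzc, hxz, .inl ⟨.inl ⟨hG, hGz⟩, hstraight⟩⟩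
    · exact ⟨z, hzc, hxz, .inr (.inr ⟨hG, hGz, by linarith⟩)⟩
  · obtain ⟨z, hzc, hxz, ⟨hGz, hstraight⟩ | ⟨hGz, hright⟩⟩ :=
      exists_straight_or_turn hnp.symm (pairWidth_comm Gp Gm ▸ hw) (crossings_comm Gp Gm ▸ hxc)
        hyx.ne hG (neg_ne_zero.mpr one_ne_zero)
    all_goals rw [crossings_comm Gm Gp] at hzc; rw [refinement_comm Gm Gp] at hxz
    · exact ⟨z, hzc, hxz, .inl ⟨.inr ⟨hG, hGz⟩, hstraight⟩⟩
    · exact ⟨z, hzc, hxz, .inr (.inl ⟨hG, hGz, by linarith⟩)⟩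

lemma IsAdmissibleTurn.ne (h : IsAdmissibleTurn Gp Gm y x z) (hxc : x ∈ crossings Gp Gm)
    (hyx : y ≠ x) : z ≠ y := by
  rintro rfl
  obtain ⟨hxGp, hxGm⟩ := notMem_verts_of_mem_crossings hnp hxc
  have hreverse (v : E3) (h : -v = v) : v = 0 := by
    have h2 : (2 : ℝ) • v = 0 := by rw [two_smul]; nth_rewrite 1 [← h]; exact neg_add_cancel v
    simpa using h2
  rcases h with ⟨⟨⟨e, he, hye, hxe⟩, -⟩ | ⟨⟨e, he, hye, hxe⟩, -⟩, hstraight⟩ |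
      ⟨⟨e, he, hye, hxe⟩, ⟨f, hf, hxf, hyf⟩, -⟩ | ⟨⟨e, he, hye, hxe⟩, ⟨f, hf, hxf, hyf⟩, -⟩
  · exact (isEdge_of_mem he).tangentVec_ne_zero hxGp hxe hye hyx (hreverse _ hstraight)
  · exact (isEdge_of_mem he).tangentVec_ne_zero hxGm hxe hye hyx (hreverse _ hstraight)
  · exact hyx (hnp.single_cross f hf e he ⟨hyf, hye⟩ ⟨hxf, hxe⟩)
  · exact hyx (hnp.single_cross e he f hf ⟨hye, hyf⟩ ⟨hxe, hxf⟩)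

end WellFormedLoop

/-- If a normal pair of geodesic graphs on `S²` with at least one
crossing has width greater than two, then its refinement graph contains a
well-formed loop. -/
theorem exists_wellFormedLoop (Gp Gm : GeoGraph) (hnp : IsNormalPair Gp Gm)
    (hcross : (crossings Gp Gm).Nonempty)
    (hw : 2 < pairWidth Gp Gm) :
    ∃ (k : ℕ) (f : ℕ → E3), IsWellFormedLoop Gp Gm k f := by
  obtain ⟨y₀, x₀, h₀⟩ := exists_adj_crossings hnp hw hcross
  obtain ⟨v, hv⟩ := exists_seq_of_forall_exists (R := IsAdmissibleTurn Gp Gm)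
    (P := fun y x => y ∈ crossings Gp Gm ∧ x ∈ crossings Gp Gm ∧ (refinement Gp Gm).Adj y x)
    (fun y x ⟨_, hx, hyx⟩ => by
      obtain ⟨z, hz, hxz, hturn⟩ := exists_admissibleTurn hnp hw hx hyx
      exact ⟨z, ⟨hx, hz, hxz⟩, hturn⟩) h₀
  have hcrossing (n : ℕ) : v n ∈ crossings Gp Gm := (hv n).1.1
  have hadj (n : ℕ) : (refinement Gp Gm).Adj (v n) (v (n + 1)) := (hv n).1.2.2
  obtain ⟨i, d, hd, hper, hinj⟩ := exists_injOn_periodic v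
    ((crossings_finite hnp).subset (Set.range_subset_iff.mpr hcrossing))
  have hd1 : d ≠ 1 := by
    rintro rfl
    exact (hadj i).ne hper.symm
  have hd2 : d ≠ 2 := by
    rintro rfl
    exact (hv i).2.ne hnp (hcrossing (i + 1)) (hadj i).ne hper
  refine ⟨d, fun l => v (i + l), by omega, by simpa using hper, fun l _ => hadj (i + l),
    fun l _ => hcrossing (i + l), fun l hl m hm hlm h => hlm (hinj hl hm h), fun l hl _ => ?_⟩
  obtain ⟨l, rfl⟩ : ∃ l', l = l' + 1 := ⟨l - 1, by omega⟩
  simpa [add_assoc, IsAdmissibleTurn] using (hv (i + l)).2
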